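/- Let a < b be real numbers and let ν be the measure on [a,b] with density ρ(x) = 1/(π√((b-x)(x-a))). Then for every real x > b, the Cauchy transform C(x) = ∫_a^b ρ(t)/(x-t) dt satisfies C(x)^2 = 1/((x-a)(x-b)). -/

import Mathlib

open MeasureTheory Real Set

/-!
With `r(t) = (x - b)(t - a) / ((b - a)(x - t))`, the cross ratio `(t, b; a, x)`, one has
`1 - r = (x - a)(b - t) / ((b - a)(x - t))` and `r' = (x - a)(x - b) / ((b - a)(x - t)²)`, so
`t ↦ 2 arcsin √(r t) / (π √((x - a)(x - b)))` is an antiderivative of the integrand. Since `r` is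
continuous on `[a, b]` and runs from `0` to `1`, the integral is `1 / √((x - a)(x - b))`;
integrability needs no estimate, since a nonnegative derivative of a function continuous on `[a, b]`
is integrable.
-/

theorem HasDerivAt.arcsin_sqrt {f : ℝ → ℝ} {f' t : ℝ} (hf : HasDerivAt f f' t) (h0 : 0 < f t)
    (h1 : f t < 1) :
    HasDerivAt (fun s => arcsin √(f s)) (f' / (2 * √(f t * (1 - f t)))) t := by
  have hne_neg : √(f t) ≠ -1 := by linarith [sqrt_nonneg (f t)]
  have hne_one : √(f t) ≠ 1 := by rw [Ne, sqrt_eq_one]; exact h1.ne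
  refine ((hasDerivAt_arcsin hne_neg hne_one).comp t (hf.sqrt h0.ne')).congr_deriv ?_
  rw [sq_sqrt h0.le, sqrt_mul h0.le]
  field_simp

noncomputable def arcsineRatio (a b x t : ℝ) : ℝ := (x - b) * (t - a) / ((b - a) * (x - t))

section arcsineRatio

variable {a b x t : ℝ}

theorem hasDerivAt_arcsineRatio (hab : a ≠ b) (hxt : x ≠ t) :
    HasDerivAt (arcsineRatio a b x) ((x - a) * (x - b) / ((b - a) * (x - t) ^ 2)) t := by
  have hba : b - a ≠ 0 := sub_ne_zero.2 hab.symm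
  have hxt : x - t ≠ 0 := sub_ne_zero.2 hxt
  refine ((((hasDerivAt_id t).sub_const a).const_mul (x - b)).div
    (((hasDerivAt_const t x).sub (hasDerivAt_id t)).const_mul (b - a))
    (mul_ne_zero hba hxt)).congr_deriv ?_
  simp only [Pi.sub_apply, id]
  field_simp
  ring

theorem one_sub_arcsineRatio (hab : a ≠ b) (hxt : x ≠ t) :
    1 - arcsineRatio a b x t = (x - a) * (b - t) / ((b - a) * (x - t)) := by
  have hba : b - a ≠ 0 := sub_ne_zero.2 hab.symm
  have hxt : x - t ≠ 0 := sub_ne_zero.2 hxt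
  unfold arcsineRatio
  field_simp
  ring

theorem arcsineRatio_mem_Ioo (ht : t ∈ Ioo a b) (hx : b < x) : arcsineRatio a b x t ∈ Ioo 0 1 := by
  obtain ⟨hat, htb⟩ := ht
  have hden : 0 < (b - a) * (x - t) := by nlinarith
  have hone := one_sub_arcsineRatio (a := a) (b := b) (x := x) (t := t) (by linarith) (by linarith)
  refine ⟨div_pos (by nlinarith) hden, ?_⟩
  have : 0 < (x - a) * (b - t) / ((b - a) * (x - t)) := div_pos (by nlinarith) hden
  linarith

theorem sqrt_arcsineRatio_mul_one_sub (ht : t ∈ Ioo a b) (hx : b < x) :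
    √(arcsineRatio a b x t * (1 - arcsineRatio a b x t)) =
      √((x - a) * (x - b)) * √((b - t) * (t - a)) / ((b - a) * (x - t)) := by
  obtain ⟨hat, htb⟩ := ht
  have hden : 0 < (b - a) * (x - t) := by nlinarith
  rw [one_sub_arcsineRatio (by linarith) (by linarith), arcsineRatio, div_mul_div_comm,
    sqrt_div' _ (mul_self_nonneg _), sqrt_mul_self hden.le, ← sqrt_mul (by nlinarith)]
  congr 2
  ring

theorem continuousOn_arcsineRatio (hab : a < b) (hx : b < x) :
    ContinuousOn (arcsineRatio a b x) (Icc a b) := by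
  unfold arcsineRatio
  fun_prop (disch := intro t ht; exact mul_ne_zero (by linarith [ht.2]) (by linarith [ht.2]))

end arcsineRatio

noncomputable def arcsineCauchyPrimitive (a b x t : ℝ) : ℝ :=
  2 / (π * √((x - a) * (x - b))) * arcsin √(arcsineRatio a b x t)

section arcsineCauchyPrimitive

variable {a b x t : ℝ}

theorem hasDerivAt_arcsineCauchyPrimitive (ht : t ∈ Ioo a b) (hx : b < x) :
    HasDerivAt (arcsineCauchyPrimitive a b x) ((1 / (π * √((b - t) * (t - a)))) / (x - t)) t := by
  obtain ⟨hr0, hr1⟩ := arcsineRatio_mem_Ioo ht hx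
  obtain ⟨hat, htb⟩ := ht
  have hr := hasDerivAt_arcsineRatio (x := x) (hat.trans htb).ne (by linarith : x ≠ t)
  refine ((hr.arcsin_sqrt hr0 hr1).const_mul _).congr_deriv ?_
  rw [sqrt_arcsineRatio_mul_one_sub ⟨hat, htb⟩ hx]
  have hxab : 0 < (x - a) * (x - b) := by nlinarith
  have : 0 < √((x - a) * (x - b)) := sqrt_pos.2 hxab
  have : 0 < √((b - t) * (t - a)) := sqrt_pos.2 (by nlinarith)
  have : x - t ≠ 0 := by linarith
  have : b - a ≠ 0 := by linarith
  field_simp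
  rw [sq_sqrt hxab.le]

theorem continuousOn_arcsineCauchyPrimitive (hab : a < b) (hx : b < x) :
    ContinuousOn (arcsineCauchyPrimitive a b x) (Icc a b) :=
  continuousOn_const.mul (continuous_arcsin.comp_continuousOn
    (continuous_sqrt.comp_continuousOn (continuousOn_arcsineRatio hab hx)))

theorem arcsineCauchyPrimitive_left : arcsineCauchyPrimitive a b x a = 0 := by
  simp [arcsineCauchyPrimitive, arcsineRatio]

theorem arcsineCauchyPrimitive_right (hab : a < b) (hx : b < x) :
    arcsineCauchyPrimitive a b x b = 1 / √((x - a) * (x - b)) := by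
  have hr : arcsineRatio a b x b = 1 := by
    rw [arcsineRatio, mul_comm, div_self (mul_ne_zero (by linarith) (by linarith))]
  have : 0 < √((x - a) * (x - b)) := sqrt_pos.2 (by nlinarith)
  rw [arcsineCauchyPrimitive, hr, sqrt_one, arcsin_one]
  field_simp

end arcsineCauchyPrimitive

theorem arcsine_cauchy_transform {a b x : ℝ} (hab : a < b) (hx : b < x) :
    ∫ t in Ioo a b, (1 / (π * √((b - t) * (t - a)))) / (x - t) = 1 / √((x - a) * (x - b)) := by
  have hderiv : ∀ t ∈ Ioo a b, HasDerivAt (arcsineCauchyPrimitive a b x)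
      ((1 / (π * √((b - t) * (t - a)))) / (x - t)) t :=
    fun t ht => hasDerivAt_arcsineCauchyPrimitive ht hx
  have hcont := continuousOn_arcsineCauchyPrimitive hab hx
  have hnonneg : ∀ t ∈ Ioo a b, 0 ≤ (1 / (π * √((b - t) * (t - a)))) / (x - t) :=
    fun t ht => div_nonneg (by positivity) (by linarith [ht.2])
  have hint := intervalIntegral.integrableOn_deriv_of_nonneg hcont hderiv hnonneg
  rw [← integral_Ioc_eq_integral_Ioo, ← intervalIntegral.integral_of_le hab.le,
    intervalIntegral.integral_eq_sub_of_hasDerivAt_of_le hab.le hcont hderiv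
      ((intervalIntegrable_iff_integrableOn_Ioc_of_le hab.le).2 hint),
    arcsineCauchyPrimitive_right hab hx, arcsineCauchyPrimitive_left, sub_zero]

theorem arcsine_cauchy_transform_sq (a b : ℝ) (hab : a < b) (x : ℝ) (hx : b < x) :
    (∫ t in Set.Ioo a b, (1 / (Real.pi * Real.sqrt ((b - t) * (t - a)))) / (x - t)) ^ 2
      = 1 / ((x - a) * (x - b)) := by
  rw [arcsine_cauchy_transform hab hx, div_pow, one_pow, sq_sqrt (by nlinarith)]
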